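/- arXiv:2406.09592 — 3 statements merged into one kernel-verified Lean document; each statement's English description precedes it below -/
import Mathlib

section
/- For every irreducible and aperiodic (primitive) stochastic matrix A of size n×n with n ≥ 1, all entries of the matrix power A^(n²−2n+2) are strictly positive. -/
/-!
Write `i → j` when `0 < A i j`. The sets of indices reaching a fixed set `S` within `t` steps grow
strictly until they exhaust all `n` indices, so whatever reaches `S` does so within `n - #S` steps.

Let `s` be the length of a shortest cycle, through `x` say, and `C` the union of the shortest
cycles through `x`. Then `s ≤ #C` and each element of `C` has a successor in `C`, so every index
reaches `C` in exactly `n - #C ≤ n - s` steps. The return times of each index form a numerical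
semigroup of gcd `1`, so `A` is eventually positive; as `A ^ s` has a loop at each `c ∈ C`, it
reaches every index from `c` in exactly `n - 1` steps. Hence `A ^ (n - s + s (n - 1))` is
positive, and `n - s + s (n - 1) ≤ n ^ 2 - 2 n + 2` once `s < n`. If instead every cycle had
length at least `n ≥ 2`, then at least `n - 1` indices reach a given `i` within `n - 2` steps and
no successor of `i` does, so every index has a single successor; the graph is that of a map, whose
period at `x` is `1` by aperiodicity, giving a loop.
-/

open Finset Filter Function

theorem Function.iterate_le_of_isFixedPt {α : Type*} [Preorder α] {g : α → α} (hg : id ≤ g)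
    {x : α} {t : ℕ} (hfix : IsFixedPt g (g^[t] x)) (k : ℕ) : g^[k] x ≤ g^[t] x := by
  rcases le_total k t with hkt | htk
  · exact monotone_iterate_of_id_le hg hkt x
  · obtain ⟨d, rfl⟩ := Nat.exists_eq_add_of_le htk
    rw [add_comm, iterate_add_apply, (hfix.iterate d).eq]

namespace Finset

variable {ι : Type*} [Fintype ι] {g : Finset ι → Finset ι}

theorem card_add_le_card_iterate (hg : id ≤ g) {S : Finset ι}
    (hcover : ∀ x, ∃ t, x ∈ g^[t] S) {t : ℕ} (ht : g^[t] S ≠ univ) :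
    #S + t ≤ #(g^[t] S) := by
  induction t with
  | zero => rfl
  | succ t ih =>
    have hsub : g^[t] S ⊆ g^[t + 1] S := monotone_iterate_of_id_le hg t.le_succ S
    have hssub : g^[t] S ⊂ g^[t + 1] S := by
      refine hsub.ssubset_of_ne fun heq => ht (eq_univ_of_forall fun x => ?_)
      obtain ⟨k, hk⟩ := hcover x
      have hfix : IsFixedPt g (g^[t] S) := by
        rw [IsFixedPt, ← iterate_succ_apply' g t, ← heq]
      exact hsub (iterate_le_of_isFixedPt hg hfix k hk)
    have := card_lt_card hssub
    have := ih fun h => ht (eq_univ_of_forall fun x => hsub (h ▸ mem_univ x))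
    omega

theorem iterate_card_sub_card_eq_univ (hg : id ≤ g) {S : Finset ι}
    (hcover : ∀ x, ∃ t, x ∈ g^[t] S) : g^[Fintype.card ι - #S] S = univ := by
  by_contra h
  have := card_add_le_card_iterate hg hcover h
  have := card_le_univ S
  exact h (eq_univ_of_card _ (by have := card_le_univ (g^[Fintype.card ι - #S] S); omega))

end Finset

namespace Matrix

section insertPreds

variable {ι R : Type*} [Fintype ι] [DecidableEq ι] [Zero R] [LinearOrder R]

def insertPreds (A : Matrix ι ι R) (S : Finset ι) : Finset ι :=
  S ∪ S.biUnion fun w => {v | 0 < A v w}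

theorem id_le_insertPreds (A : Matrix ι ι R) : id ≤ insertPreds A := fun _ => subset_union_left

end insertPreds

section Ring

variable {ι R : Type*} [Ring R] [LinearOrder R] [IsStrictOrderedRing R]

theorem mul_apply_pos_iff {l m o : Type*} [Fintype m] {M : Matrix l m R} {N : Matrix m o R}
    (hM : ∀ i j, 0 ≤ M i j) (hN : ∀ i j, 0 ≤ N i j) {i : l} {j : o} :
    0 < (M * N) i j ↔ ∃ k, 0 < M i k ∧ 0 < N k j := by
  rw [mul_apply, sum_pos_iff_of_nonneg fun k _ => mul_nonneg (hM i k) (hN k j)]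
  simp only [mem_univ, true_and]
  exact exists_congr fun k => ⟨fun h => ⟨pos_of_mul_pos_left h (hN k j),
    pos_of_mul_pos_right h (hM i k)⟩, fun h => mul_pos h.1 h.2⟩

variable [DecidableEq ι]

theorem one_apply_pos_iff {i j : ι} : 0 < (1 : Matrix ι ι R) i j ↔ i = j := by
  rcases eq_or_ne i j with rfl | h <;> simp [*]

variable [Fintype ι] {A : Matrix ι ι R}

theorem pow_add_apply_pos_iff (hA : ∀ i j, 0 ≤ A i j) {a b : ℕ} {i j : ι} :
    0 < (A ^ (a + b)) i j ↔ ∃ k, 0 < (A ^ a) i k ∧ 0 < (A ^ b) k j := by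
  rw [pow_add, mul_apply_pos_iff (pow_apply_nonneg hA a) (pow_apply_nonneg hA b)]

theorem pow_add_apply_pos (hA : ∀ i j, 0 ≤ A i j) {a b : ℕ} {i k j : ι}
    (hik : 0 < (A ^ a) i k) (hkj : 0 < (A ^ b) k j) : 0 < (A ^ (a + b)) i j :=
  (pow_add_apply_pos_iff hA).2 ⟨k, hik, hkj⟩

theorem pow_apply_pos_of_le (hA : ∀ i j, 0 ≤ A i j) (hrow : ∀ i, ∃ j, 0 < A i j) {L M : ℕ}
    (hL : ∀ i j, 0 < (A ^ L) i j) (hLM : L ≤ M) (i j : ι) : 0 < (A ^ M) i j := by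
  induction M, hLM using Nat.le_induction generalizing i with
  | base => exact hL i j
  | succ M _ ih =>
    obtain ⟨k, hik⟩ := hrow i
    rw [add_comm]
    exact pow_add_apply_pos hA (by rwa [pow_one]) (ih k)

theorem IsIrreducible.exists_apply_pos (hA : A.IsIrreducible) (i : ι) : ∃ j, 0 < A i j := by
  obtain ⟨k, hk, hii⟩ := (isIrreducible_iff_exists_pow_pos hA.nonneg).1 hA i i
  obtain ⟨j, hij, -⟩ := (pow_add_apply_pos_iff (a := 1) hA.nonneg).1
    (by rwa [Nat.add_sub_cancel' hk])
  exact ⟨j, by rwa [pow_one] at hij⟩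

theorem mem_iterate_insertPreds (hA : ∀ i j, 0 ≤ A i j) {S : Finset ι} {t : ℕ} {v : ι} :
    v ∈ (insertPreds A)^[t] S ↔ ∃ t' ≤ t, ∃ w ∈ S, 0 < (A ^ t') v w := by
  induction t generalizing v with
  | zero => simp [one_apply_pos_iff]
  | succ t ih =>
    simp only [iterate_succ_apply', insertPreds, mem_union, mem_biUnion, mem_filter, mem_univ,
      true_and, ih]
    constructor
    · rintro (⟨t', ht', w, hw, hvw⟩ | ⟨u, ⟨t', ht', w, hw, huw⟩, hvu⟩)
      · exact ⟨t', ht'.trans t.le_succ, w, hw, hvw⟩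
      · exact ⟨1 + t', by omega, w, hw, pow_add_apply_pos hA (by rwa [pow_one]) huw⟩
    · rintro ⟨t', ht', w, hw, hvw⟩
      rcases Nat.of_le_succ ht' with ht' | rfl
      · exact .inl ⟨t', ht', w, hw, hvw⟩
      · obtain ⟨u, hvu, huw⟩ := (pow_add_apply_pos_iff (a := 1) hA).1 (by rwa [add_comm])
        exact .inr ⟨u, ⟨t, le_rfl, w, hw, huw⟩, by rwa [pow_one] at hvu⟩

theorem exists_pow_apply_pos_mem_of_le (hA : ∀ i j, 0 ≤ A i j) {S : Finset ι}
    (hS : ∀ c ∈ S, ∃ c' ∈ S, 0 < A c c') {v : ι} {t' t : ℕ} (htt : t' ≤ t)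
    (hv : ∃ w ∈ S, 0 < (A ^ t') v w) : ∃ w ∈ S, 0 < (A ^ t) v w := by
  induction t, htt using Nat.le_induction with
  | base => exact hv
  | succ t _ ih =>
    obtain ⟨w, hw, hvw⟩ := ih
    obtain ⟨c, hc, hwc⟩ := hS w hw
    exact ⟨c, hc, pow_add_apply_pos hA hvw (by rwa [pow_one])⟩

theorem exists_pow_card_sub_card_apply_pos_mem (hA : ∀ i j, 0 ≤ A i j) {S : Finset ι}
    (hS : ∀ c ∈ S, ∃ c' ∈ S, 0 < A c c') (hreach : ∀ v, ∃ k, ∃ w ∈ S, 0 < (A ^ k) v w)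
    (v : ι) : ∃ w ∈ S, 0 < (A ^ (Fintype.card ι - #S)) v w := by
  have hcover : ∀ v, ∃ t, v ∈ (insertPreds A)^[t] S := fun v => by
    obtain ⟨k, hk⟩ := hreach v
    exact ⟨k, (mem_iterate_insertPreds hA).2 ⟨k, le_rfl, hk⟩⟩
  obtain ⟨t', ht', hv⟩ := (mem_iterate_insertPreds hA).1
    ((iterate_card_sub_card_eq_univ (id_le_insertPreds A) hcover).symm ▸ mem_univ v)
  exact exists_pow_apply_pos_mem_of_le hA hS ht' hv

theorem eq_iterate_of_pow_apply_pos (hA : ∀ i j, 0 ≤ A i j) {f : ι → ι}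
    (hf : ∀ i j, 0 < A i j → j = f i) {k : ℕ} {i j : ι} (hij : 0 < (A ^ k) i j) :
    j = f^[k] i := by
  induction k generalizing j with
  | zero => simpa [one_apply_pos_iff, eq_comm] using hij
  | succ k ih =>
    obtain ⟨m, him, hmj⟩ := (pow_add_apply_pos_iff hA).1 hij
    rw [iterate_succ_apply', ← ih him]
    exact hf m j (by rwa [pow_one] at hmj)

theorem eq_of_apply_pos_of_forall_card_le (hA : A.IsIrreducible)
    (hlong : ∀ v k, 0 < k → 0 < (A ^ k) v v → Fintype.card ι ≤ k) {i j j' : ι}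
    (hj : 0 < A i j) (hj' : 0 < A i j') : j = j' := by
  by_contra hne
  have hcard : 2 ≤ Fintype.card ι := by
    simpa [card_pair hne] using card_le_univ {j, j'}
  set D := (insertPreds A)^[Fintype.card ι - 2] {i}
  have hout : ∀ x, 0 < A i x → x ∉ D := fun x hx hxD => by
    obtain ⟨t, ht, w, hw, hxw⟩ := (mem_iterate_insertPreds hA.nonneg).1 hxD
    rw [mem_singleton.1 hw] at hxw
    have := hlong i (1 + t) (by omega) (pow_add_apply_pos hA.nonneg (by rwa [pow_one]) hxw)
    omega
  have hcover : ∀ x, ∃ t, x ∈ (insertPreds A)^[t] {i} := fun x => by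
    obtain ⟨k, -, hk⟩ := (isIrreducible_iff_exists_pow_pos hA.nonneg).1 hA x i
    exact ⟨k, (mem_iterate_insertPreds hA.nonneg).2 ⟨k, le_rfl, i, mem_singleton_self i, hk⟩⟩
  have hgrow : #{i} + (Fintype.card ι - 2) ≤ #D :=
    card_add_le_card_iterate (id_le_insertPreds A) hcover fun h =>
      hout j hj (eq_univ_iff_forall.1 h j)
  have hsmall : #D ≤ #(univ \ {j, j'}) := by
    refine card_le_card fun x hx => ?_
    simp only [Finset.mem_sdiff, mem_univ, mem_insert, mem_singleton, true_and]
    rintro (rfl | rfl)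
    exacts [hout x hj hx, hout x hj' hx]
  rw [card_sdiff_of_subset (subset_univ _), card_univ, card_pair hne] at hsmall
  rw [card_singleton] at hgrow
  omega

theorem card_le_one_of_forall_card_le (hA : A.IsIrreducible) {i : ι}
    (haper : ∀ d : ℕ, (∀ k, 1 ≤ k → 0 < (A ^ k) i i → d ∣ k) → d = 1)
    (hlong : ∀ v k, 0 < k → 0 < (A ^ k) v v → Fintype.card ι ≤ k) : Fintype.card ι ≤ 1 := by
  choose f hf using hA.exists_apply_pos
  have hfun : ∀ i j, 0 < A i j → j = f i := fun i j hij =>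
    eq_of_apply_pos_of_forall_card_le hA hlong hij (hf i)
  have hperiod : minimalPeriod f i = 1 := haper _ fun k _ hk =>
    IsPeriodicPt.minimalPeriod_dvd (eq_iterate_of_pow_apply_pos hA.nonneg hfun hk).symm
  have hfix : f i = i := minimalPeriod_eq_one_iff_isFixedPt.1 hperiod
  exact hlong i 1 one_pos (by simpa [hfix] using hf i)

variable (A) in
/-- When `s` is the length of a shortest cycle through `i`, this is the union of the vertex sets
of the shortest cycles through `i`. -/
def cycleSet (s : ℕ) (i : ι) : Finset ι :=
  {c | ∃ t < s, 0 < (A ^ t) i c ∧ 0 < (A ^ (s - t)) c i}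

theorem pow_apply_self_pos_of_mem_cycleSet (hA : ∀ i j, 0 ≤ A i j) {s : ℕ} {i c : ι}
    (hc : c ∈ cycleSet A s i) : 0 < (A ^ s) c c := by
  obtain ⟨t, ht, hic, hci⟩ := (mem_filter.1 hc).2
  simpa [Nat.sub_add_cancel ht.le] using pow_add_apply_pos hA hci hic

theorem self_mem_cycleSet {s : ℕ} {i : ι} (hs : 0 < s) (hi : 0 < (A ^ s) i i) :
    i ∈ cycleSet A s i :=
  mem_filter.2 ⟨mem_univ i, 0, hs, by simp, by simpa using hi⟩

theorem exists_apply_pos_mem_cycleSet (hA : ∀ i j, 0 ≤ A i j) {s : ℕ} {i c : ι}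
    (hi : 0 < (A ^ s) i i) (hc : c ∈ cycleSet A s i) :
    ∃ c' ∈ cycleSet A s i, 0 < A c c' := by
  obtain ⟨t, ht, hic, hci⟩ := (mem_filter.1 hc).2
  obtain ⟨c', hcc', hc'i⟩ := (pow_add_apply_pos_iff (a := 1) (b := s - (t + 1)) hA).1
    (by rwa [← Nat.sub_sub, Nat.add_sub_cancel' (by omega)])
  rw [pow_one] at hcc'
  refine ⟨c', ?_, hcc'⟩
  rcases (Nat.succ_le_of_lt ht).lt_or_eq with ht' | ht'
  · exact mem_filter.2 ⟨mem_univ _, t + 1, ht', pow_add_apply_pos hA hic (by rwa [pow_one]), hc'i⟩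
  · rw [← ht', Nat.sub_self, pow_zero, one_apply_pos_iff] at hc'i
    rw [hc'i]
    exact self_mem_cycleSet (by omega) hi

theorem le_card_cycleSet (hA : ∀ i j, 0 ≤ A i j) {s : ℕ} {i : ι} (hi : 0 < (A ^ s) i i)
    (hmin : ∀ k, 0 < k → k < s → ¬ 0 < (A ^ k) i i) : s ≤ #(cycleSet A s i) := by
  have hpos : ∀ t, ∃ c, t < s → 0 < (A ^ t) i c ∧ 0 < (A ^ (s - t)) c i := fun t => by
    by_cases ht : t < s
    · obtain ⟨c, hc⟩ := (pow_add_apply_pos_iff hA).1 (by rwa [Nat.add_sub_cancel' ht.le])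
      exact ⟨c, fun _ => hc⟩
    · exact ⟨i, fun h => absurd h ht⟩
  choose c hc using hpos
  refine le_card_of_inj_on_range c (fun t ht => mem_filter.2 ⟨mem_univ _, t, ht, hc t ht⟩) ?_
  intro a ha b hb hab
  by_contra hne
  wlog hlt : a < b generalizing a b
  · exact this b hb a ha hab.symm (Ne.symm hne) (by omega)
  -- two positions of a shortest cycle carrying the same index would cut out a shorter cycle
  refine hmin (a + (s - b)) (by omega) (by omega) (pow_add_apply_pos hA (hc a ha).1 ?_)
  rw [hab]
  exact (hc b hb).2

theorem IsIrreducible.exists_pow_apply_pos_mem_cycleSet (hA : A.IsIrreducible) {s : ℕ} {x : ι}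
    (hs : 0 < s) (hx : 0 < (A ^ s) x x) (v : ι) :
    ∃ c ∈ cycleSet A s x, 0 < (A ^ (Fintype.card ι - #(cycleSet A s x))) v c :=
  exists_pow_card_sub_card_apply_pos_mem hA.nonneg
    (fun _ hc => exists_apply_pos_mem_cycleSet hA.nonneg hx hc) (fun v => by
      obtain ⟨k, -, hk⟩ := (isIrreducible_iff_exists_pow_pos hA.nonneg).1 hA v x
      exact ⟨k, x, self_mem_cycleSet hs hx, hk⟩) v

theorem eventually_pow_apply_self_pos (hA : ∀ i j, 0 ≤ A i j) {i : ι}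
    (haper : ∀ d : ℕ, (∀ k, 1 ≤ k → 0 < (A ^ k) i i → d ∣ k) → d = 1) :
    ∀ᶠ m in atTop, 0 < (A ^ m) i i := by
  set T := {k | 0 < (A ^ k) i i}
  have hgcd : Nat.setGcd T = 1 := haper _ fun k _ hk => Nat.setGcd_dvd_of_mem hk
  obtain ⟨N, hN⟩ := Nat.exists_mem_closure_of_ge T
  refine eventually_atTop.2 ⟨N, fun m hm => ?_⟩
  exact AddSubmonoid.closure_induction (fun _ hk => hk) (by simp)
    (fun _ _ _ _ => pow_add_apply_pos hA) (hN m hm (hgcd ▸ one_dvd m))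

theorem IsIrreducible.eventually_pow_apply_pos (hA : A.IsIrreducible)
    (haper : ∀ i, ∀ d : ℕ, (∀ k, 1 ≤ k → 0 < (A ^ k) i i → d ∣ k) → d = 1) :
    ∀ᶠ m in atTop, ∀ i j, 0 < (A ^ m) i j := by
  refine eventually_all.2 fun i => eventually_all.2 fun j => ?_
  obtain ⟨k, -, hij⟩ := (isIrreducible_iff_exists_pow_pos hA.nonneg).1 hA i j
  filter_upwards [(tendsto_sub_atTop_nat k).eventually
    (eventually_pow_apply_self_pos hA.nonneg (haper j)), eventually_ge_atTop k] with m hm hkm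
  simpa [Nat.add_sub_cancel' hkm] using pow_add_apply_pos hA.nonneg hij hm

end Ring

theorem pow_card_sub_one_apply_pos_of_apply_self_pos {ι R : Type*} [Fintype ι] [DecidableEq ι]
    [CommRing R] [LinearOrder R] [IsStrictOrderedRing R] {A : Matrix ι ι R}
    (hA : ∀ i j, 0 ≤ A i j) {x : ι} (hx : 0 < A x x) (hreach : ∀ j, ∃ k, 0 < (A ^ k) x j)
    (j : ι) : 0 < (A ^ (Fintype.card ι - 1)) x j := by
  obtain ⟨w, hw, hjw⟩ := exists_pow_card_sub_card_apply_pos_mem (A := Aᵀ) (S := {x})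
    (fun i j => hA j i) (by simpa using hx) (fun v => by simpa [← transpose_pow] using hreach v) j
  rwa [mem_singleton.1 hw, ← transpose_pow, card_singleton] at hjw

theorem pow_mul_card_sub_one_apply_pos {ι R : Type*} [Fintype ι] [DecidableEq ι] [CommRing R]
    [LinearOrder R] [IsStrictOrderedRing R] {A : Matrix ι ι R} (hA : ∀ i j, 0 ≤ A i j)
    (hprim : ∀ᶠ m in atTop, ∀ i j, 0 < (A ^ m) i j) {s : ℕ} (hs : 0 < s) {c : ι}
    (hc : 0 < (A ^ s) c c) (j : ι) : 0 < (A ^ (s * (Fintype.card ι - 1))) c j := by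
  obtain ⟨N, hN⟩ := eventually_atTop.1 hprim
  rw [pow_mul]
  refine pow_card_sub_one_apply_pos_of_apply_self_pos (pow_apply_nonneg hA s) hc (fun j => ?_) j
  exact ⟨N, by simpa [← pow_mul] using hN (s * N) (Nat.le_mul_of_pos_left N hs) c j⟩

end Matrix

theorem wielandt_exponent_bound {n c s : ℕ} (hs : 0 < s) (hsc : s ≤ c) (hcn : c ≤ n)
    (hsn : s < n ∨ n ≤ 1) : n - c + s * (n - 1) ≤ n ^ 2 - 2 * n + 2 := by
  rcases hsn with hsn | hn
  · have h2n : 2 * n ≤ n ^ 2 := by nlinarith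
    have hsn' : s ≤ n - 1 := by omega
    zify [hcn, h2n, (by omega : 1 ≤ n)] at hsn' ⊢
    nlinarith
  · interval_cases n <;> omega

open Matrix in
theorem wielandt_primitive_power_pos_general (n : ℕ)
    (A : Matrix (Fin n) (Fin n) ℝ)
    (hnonneg : ∀ i j, 0 ≤ A i j)
    (hirr : ∀ i j, ∃ k, 1 ≤ k ∧ 0 < (A ^ k) i j)
    (haper : ∀ i, ∀ d : ℕ, (∀ k, 1 ≤ k → 0 < (A ^ k) i i → d ∣ k) → d = 1) :
    ∀ i j, 0 < (A ^ (n ^ 2 - 2 * n + 2)) i j := by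
  intro i j
  have hA : A.IsIrreducible := (isIrreducible_iff_exists_pow_pos hnonneg).2 hirr
  have hcycle : ∃ s, 0 < s ∧ ∃ x, 0 < (A ^ s) x x :=
    (hirr i i).imp fun _ hk => ⟨hk.1, i, hk.2⟩
  obtain ⟨hs, x, hx⟩ := Nat.find_spec hcycle
  set s := Nat.find hcycle
  have hsn : s < n ∨ n ≤ 1 := by
    refine (lt_or_ge s n).imp id fun hns => ?_
    simpa using card_le_one_of_forall_card_le hA (haper x) fun j k hk hj =>
      by simpa using hns.trans (Nat.find_min' hcycle ⟨hk, j, hj⟩)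
  set C := cycleSet A s x
  have hpos : ∀ v j, 0 < (A ^ (n - #C + s * (n - 1))) v j := fun v j => by
    obtain ⟨c, hc, hvc⟩ := hA.exists_pow_apply_pos_mem_cycleSet hs hx v
    simpa using pow_add_apply_pos hnonneg hvc (pow_mul_card_sub_one_apply_pos hnonneg
      (hA.eventually_pow_apply_pos haper) hs (pow_apply_self_pos_of_mem_cycleSet hnonneg hc) j)
  have hsC : s ≤ #C := le_card_cycleSet hnonneg hx fun k hk hks hkx =>
    Nat.find_min hcycle hks ⟨hk, x, hkx⟩
  exact pow_apply_pos_of_le hnonneg hA.exists_apply_pos hpos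
    (wielandt_exponent_bound hs hsC (by simpa using card_le_univ C) hsn) i j

/-- Wielandt's bound: for a primitive (irreducible and aperiodic) row-stochastic
matrix `A` of size `n × n` (`n ≥ 1`), all entries of `A ^ (n² - 2n + 2)` are
strictly positive. -/
theorem wielandt_primitive_power_pos (n : ℕ) (hn : 1 ≤ n)
    (A : Matrix (Fin n) (Fin n) ℝ)
    (hnonneg : ∀ i j, 0 ≤ A i j)
    (hrow : ∀ i, ∑ j, A i j = 1)
    (hirr : ∀ i j, ∃ k, 1 ≤ k ∧ 0 < (A ^ k) i j)
    (haper : ∀ i, ∀ d : ℕ, (∀ k, 1 ≤ k → 0 < (A ^ k) i i → d ∣ k) → d = 1) :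
    ∀ i j, 0 < (A ^ (n ^ 2 - 2 * n + 2)) i j :=
  wielandt_primitive_power_pos_general n A hnonneg hirr haper
end

section
/- Let P_1, …, P_N be n×n row-stochastic matrices such that every entry of Q := P_N ⋯ P_1 is at least λ > 0, with n·λ ≤ 1. Then for every vector e_0 in ℝ^n, span(Q e_0) ≤ (1 − n·λ) · span(e_0). -/
/-- `span v = max v - min v`. -/
noncomputable def spanv {n : ℕ} (v : Fin n → ℝ) : ℝ :=
  (⨆ i, v i) - (⨅ i, v i)

lemma prod_stoch {n : ℕ} (L : List (Matrix (Fin n) (Fin n) ℝ))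
    (h1 : ∀ A ∈ L, ∀ i j, 0 ≤ A i j) (h2 : ∀ A ∈ L, ∀ i, ∑ j, A i j = 1) :
    (∀ i j, 0 ≤ L.prod i j) ∧ (∀ i, ∑ j, L.prod i j = 1) := by
  induction L with
  | nil =>
      constructor
      · intro i j
        simp [Matrix.one_apply]
        split <;> norm_num
      · intro i
        simp [Matrix.one_apply]
  | cons A L ih =>
      obtain ⟨ih1, ih2⟩ := ih (fun B hB => h1 B (List.mem_cons_of_mem _ hB))
        (fun B hB => h2 B (List.mem_cons_of_mem _ hB))
      have hA1 := h1 A List.mem_cons_self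
      have hA2 := h2 A List.mem_cons_self
      constructor
      · intro i j
        rw [List.prod_cons, Matrix.mul_apply]
        exact Finset.sum_nonneg fun k _ => mul_nonneg (hA1 i k) (ih1 k j)
      · intro i
        rw [List.prod_cons]
        simp only [Matrix.mul_apply]
        rw [Finset.sum_comm]
        calc ∑ k, ∑ j, A i k * L.prod k j
            = ∑ k, A i k * ∑ j, L.prod k j := by
              simp [Finset.mul_sum]
          _ = ∑ k, A i k := by simp [ih2]
          _ = 1 := hA2 i

/-- If every entry of the product `Q = P_N ⋯ P_1` of row-stochastic matrices is
at least `λ > 0` with `n λ ≤ 1`, then `span (Q e₀) ≤ (1 - n λ) · span e₀`. -/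
theorem product_span_contraction (n N : ℕ)
    (P : Fin N → Matrix (Fin n) (Fin n) ℝ)
    (hPnonneg : ∀ t i j, 0 ≤ P t i j)
    (hProw : ∀ t i, ∑ j, P t i j = 1)
    (lam : ℝ) (hlam : 0 < lam) (hnlam : (n : ℝ) * lam ≤ 1)
    (hentries : ∀ i j, lam ≤ ((List.ofFn P).reverse.prod) i j)
    (e0 : Fin n → ℝ) :
    spanv (((List.ofFn P).reverse.prod).mulVec e0) ≤ (1 - (n : ℝ) * lam) * spanv e0 := by
  set Q := (List.ofFn P).reverse.prod with hQdef
  obtain ⟨hQ0, hQ1⟩ := prod_stoch (List.ofFn P).reverse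
    (by
      intro A hA
      rw [List.mem_reverse, List.mem_ofFn] at hA
      obtain ⟨t, rfl⟩ := hA
      exact hPnonneg t)
    (by
      intro A hA
      rw [List.mem_reverse, List.mem_ofFn] at hA
      obtain ⟨t, rfl⟩ := hA
      exact hProw t)
  rcases Nat.eq_zero_or_pos n with hn | hn
  · subst hn
    simp [spanv, Real.iSup_of_isEmpty, Real.iInf_of_isEmpty]
  haveI : Nonempty (Fin n) := ⟨⟨0, hn⟩⟩
  set M := ⨆ j, e0 j with hM
  set m := ⨅ j, e0 j with hm
  set S := ∑ j, e0 j with hS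
  have hle : ∀ j, e0 j ≤ M := fun j => le_ciSup (Set.Finite.bddAbove (Set.finite_range e0)) j
  have hge : ∀ j, m ≤ e0 j := fun j => ciInf_le (Set.Finite.bddBelow (Set.finite_range e0)) j
  have hcoef : ∀ i, ∑ j, (Q i j - lam) = 1 - (n : ℝ) * lam := by
    intro i
    rw [Finset.sum_sub_distrib, hQ1 i]
    simp [mul_comm]
  have hsplit : ∀ i, Q.mulVec e0 i = (∑ j, (Q i j - lam) * e0 j) + lam * S := by
    intro i
    simp only [Matrix.mulVec, dotProduct, hS, Finset.mul_sum,
      ← Finset.sum_add_distrib]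
    apply Finset.sum_congr rfl
    intro j _
    ring
  have key_up : ∀ i, Q.mulVec e0 i ≤ (1 - (n : ℝ) * lam) * M + lam * S := by
    intro i
    rw [hsplit i]
    have : ∑ j, (Q i j - lam) * e0 j ≤ ∑ j, (Q i j - lam) * M := by
      apply Finset.sum_le_sum
      intro j _
      exact mul_le_mul_of_nonneg_left (hle j) (sub_nonneg.2 (hentries i j))
    have h2 : ∑ j, (Q i j - lam) * M = (1 - (n : ℝ) * lam) * M := by
      rw [← Finset.sum_mul, hcoef i]
    linarith
  have key_lo : ∀ i, (1 - (n : ℝ) * lam) * m + lam * S ≤ Q.mulVec e0 i := by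
    intro i
    rw [hsplit i]
    have : ∑ j, (Q i j - lam) * m ≤ ∑ j, (Q i j - lam) * e0 j := by
      apply Finset.sum_le_sum
      intro j _
      exact mul_le_mul_of_nonneg_left (hge j) (sub_nonneg.2 (hentries i j))
    have h2 : ∑ j, (Q i j - lam) * m = (1 - (n : ℝ) * lam) * m := by
      rw [← Finset.sum_mul, hcoef i]
    linarith
  have hsup : (⨆ i, Q.mulVec e0 i) ≤ (1 - (n : ℝ) * lam) * M + lam * S := ciSup_le key_up
  have hinf : (1 - (n : ℝ) * lam) * m + lam * S ≤ ⨅ i, Q.mulVec e0 i := le_ciInf key_lo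
  have : spanv e0 = M - m := rfl
  rw [spanv, this]
  nlinarith [hsup, hinf]
end

section
/- Suppose for every t ≥ 0, e_{t+1} = γ · (P'_t e_t), where γ ∈ [0,1], each P'_t is an n×n row-stochastic matrix, (P*)^N has all positive entries for some row-stochastic P* and some N ≥ 1, and P*(i,j) > 0 implies P'_t(i,j) ≥ δ' > 0 for all t,i,j. Then span(e_N) ≤ γ^N · (1 − n·δ'^N) · span(e_0). -/
open Matrix Finset

variable {ι : Type*} [Fintype ι]

theorem mulVec_apply_eq_mul_sum_add (A : Matrix ι ι ℝ) (δ : ℝ) (v : ι → ℝ) (i : ι) :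
    (A *ᵥ v) i = δ * ∑ j, v j + ∑ j, (A i j - δ) * v j := by
  simp only [mulVec, dotProduct, mul_sum, ← sum_add_distrib]
  exact sum_congr rfl fun j _ => by ring

variable [DecidableEq ι]

section Minorization

variable {A : Matrix ι ι ℝ} {δ : ℝ}

theorem sum_sub_of_mem_rowStochastic (hA : A ∈ rowStochastic ℝ ι) (i : ι) :
    ∑ j, (A i j - δ) = 1 - Fintype.card ι * δ := by
  rw [sum_sub_distrib, sum_row_of_mem_rowStochastic hA, sum_const, card_univ, nsmul_eq_mul]

theorem mulVec_apply_le_of_le (hA : A ∈ rowStochastic ℝ ι) (hδA : ∀ i j, δ ≤ A i j) {M : ℝ}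
    {v : ι → ℝ} (hv : ∀ j, v j ≤ M) (i : ι) :
    (A *ᵥ v) i ≤ δ * ∑ j, v j + (1 - Fintype.card ι * δ) * M := by
  rw [mulVec_apply_eq_mul_sum_add A δ, ← sum_sub_of_mem_rowStochastic hA, sum_mul]
  gcongr with j
  exacts [sub_nonneg.2 (hδA i j), hv j]

theorem le_mulVec_apply_of_le (hA : A ∈ rowStochastic ℝ ι) (hδA : ∀ i j, δ ≤ A i j) {m : ℝ}
    {v : ι → ℝ} (hv : ∀ j, m ≤ v j) (i : ι) :
    δ * ∑ j, v j + (1 - Fintype.card ι * δ) * m ≤ (A *ᵥ v) i := by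
  rw [mulVec_apply_eq_mul_sum_add A δ, ← sum_sub_of_mem_rowStochastic hA, sum_mul]
  gcongr with j
  exacts [sub_nonneg.2 (hδA i j), hv j]

end Minorization

/-- `transitionProd P k = P (k - 1) * ⋯ * P 0`. -/
noncomputable def transitionProd (P : ℕ → Matrix ι ι ℝ) : ℕ → Matrix ι ι ℝ
  | 0 => 1
  | k + 1 => P k * transitionProd P k

theorem transitionProd_mem_rowStochastic {P : ℕ → Matrix ι ι ℝ}
    (hP : ∀ t, P t ∈ rowStochastic ℝ ι) (k : ℕ) : transitionProd P k ∈ rowStochastic ℝ ι := by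
  induction k with
  | zero => exact Submonoid.one_mem _
  | succ k ih => exact Submonoid.mul_mem _ (hP k) ih

theorem eq_pow_smul_transitionProd_mulVec {P : ℕ → Matrix ι ι ℝ} {γ : ℝ} {e : ℕ → ι → ℝ}
    (he : ∀ t, e (t + 1) = γ • P t *ᵥ e t) (k : ℕ) :
    e k = γ ^ k • transitionProd P k *ᵥ e 0 := by
  induction k with
  | zero => simp [transitionProd]
  | succ k ih =>
    rw [he k, ih, mulVec_smul, smul_smul, mulVec_mulVec, ← pow_succ']
    rfl

theorem pow_le_transitionProd_apply {P : ℕ → Matrix ι ι ℝ} {S : Matrix ι ι ℝ} {δ : ℝ}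
    (hP : ∀ t, P t ∈ rowStochastic ℝ ι) (hS : ∀ i j, 0 ≤ S i j) (hδ : 0 ≤ δ)
    (hdom : ∀ t i j, 0 < S i j → δ ≤ P t i j) (k : ℕ) {i j : ι} (hSk : 0 < (S ^ k) i j) :
    δ ^ k ≤ transitionProd P k i j := by
  induction k generalizing i j with
  | zero =>
    obtain rfl : i = j := by
      by_contra h
      simp [one_apply_ne h] at hSk
    simp [transitionProd]
  | succ k ih =>
    rw [pow_succ', mul_apply] at hSk
    obtain ⟨l, -, hl⟩ : ∃ l ∈ univ, 0 < S i l * (S ^ k) l j := by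
      by_contra! h
      exact hSk.not_ge (sum_nonpos h)
    have hSkl : 0 < (S ^ k) l j := pos_of_mul_pos_right hl (hS i l)
    have hSil : 0 < S i l := pos_of_mul_pos_left hl hSkl.le
    calc δ ^ (k + 1) = δ * δ ^ k := pow_succ' δ k
      _ ≤ P k i l * transitionProd P k l j :=
        mul_le_mul (hdom k i l hSil) (ih hSkl) (pow_nonneg hδ k) (nonneg_of_mem_rowStochastic (hP k))
      _ ≤ ∑ m, P k i m * transitionProd P k m j :=
        single_le_sum (f := fun m => P k i m * transitionProd P k m j)
          (fun m _ => mul_nonneg (nonneg_of_mem_rowStochastic (hP k))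
            (nonneg_of_mem_rowStochastic (transitionProd_mem_rowStochastic hP k))) (mem_univ l)
      _ = transitionProd P (k + 1) i j := mul_apply.symm


theorem spanv_smul {n : ℕ} {c : ℝ} (hc : 0 ≤ c) (v : Fin n → ℝ) :
    spanv (c • v) = c * spanv v := by
  simp only [spanv, Pi.smul_apply, smul_eq_mul, mul_sub, Real.mul_iSup_of_nonneg hc,
    Real.mul_iInf_of_nonneg hc]

theorem spanv_mulVec_le {n : ℕ} {A : Matrix (Fin n) (Fin n) ℝ} {δ : ℝ}
    (hA : A ∈ rowStochastic ℝ (Fin n)) (hδA : ∀ i j, δ ≤ A i j) (v : Fin n → ℝ) :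
    spanv (A *ᵥ v) ≤ (1 - n * δ) * spanv v := by
  rcases n.eq_zero_or_pos with rfl | hn
  · simp [spanv]
  have : Nonempty (Fin n) := Fin.pos_iff_nonempty.mp hn
  have hup := ciSup_le (mulVec_apply_le_of_le hA hδA (le_ciSup (Set.finite_range v).bddAbove))
  have hlo := le_ciInf (le_mulVec_apply_of_le hA hδA (ciInf_le (Set.finite_range v).bddBelow))
  rw [Fintype.card_fin] at hup hlo
  rw [spanv, spanv, mul_sub]
  linarith

theorem value_iteration_span_contraction_general (n N : ℕ)
    (γ : ℝ) (hγ0 : 0 ≤ γ)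
    (P' : ℕ → Matrix (Fin n) (Fin n) ℝ)
    (Pstar : Matrix (Fin n) (Fin n) ℝ)
    (hPnonneg : ∀ t i j, 0 ≤ P' t i j)
    (hProw : ∀ t i, ∑ j, P' t i j = 1)
    (hSnonneg : ∀ i j, 0 ≤ Pstar i j)
    (hpos : ∀ i j, 0 < (Pstar ^ N) i j)
    (δ' : ℝ) (hδ : 0 < δ')
    (hdom : ∀ t i j, 0 < Pstar i j → δ' ≤ P' t i j)
    (e : ℕ → Fin n → ℝ)
    (hdyn : ∀ t, e (t + 1) = γ • (P' t).mulVec (e t)) :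
    spanv (e N) ≤ γ ^ N * (1 - (n : ℝ) * δ' ^ N) * spanv (e 0) := by
  have hP : ∀ t, P' t ∈ rowStochastic ℝ (Fin n) :=
    fun t => mem_rowStochastic_iff_sum.2 ⟨hPnonneg t, hProw t⟩
  have hlow : ∀ i j, δ' ^ N ≤ transitionProd P' N i j := fun i j =>
    pow_le_transitionProd_apply hP hSnonneg hδ.le hdom N (hpos i j)
  rw [eq_pow_smul_transitionProd_mulVec hdyn, spanv_smul (pow_nonneg hγ0 N), mul_assoc]
  exact mul_le_mul_of_nonneg_left
    (spanv_mulVec_le (transitionProd_mem_rowStochastic hP N) hlow (e 0)) (pow_nonneg hγ0 N)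

/-- Core estimate of Theorem 3.3: if `e_{t+1} = γ P'_t e_t` with row-stochastic
`P'_t` dominating the positivity pattern of `P*` (whose `N`-th power is
entrywise positive) with entries at least `δ'`, then
`span e_N ≤ γ^N (1 - n δ'^N) span e₀`. -/
theorem value_iteration_span_contraction (n N : ℕ) (hN : 1 ≤ N)
    (γ : ℝ) (hγ0 : 0 ≤ γ) (hγ1 : γ ≤ 1)
    (P' : ℕ → Matrix (Fin n) (Fin n) ℝ)
    (Pstar : Matrix (Fin n) (Fin n) ℝ)
    (hPnonneg : ∀ t i j, 0 ≤ P' t i j)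
    (hProw : ∀ t i, ∑ j, P' t i j = 1)
    (hSnonneg : ∀ i j, 0 ≤ Pstar i j)
    (hSrow : ∀ i, ∑ j, Pstar i j = 1)
    (hpos : ∀ i j, 0 < (Pstar ^ N) i j)
    (δ' : ℝ) (hδ : 0 < δ')
    (hdom : ∀ t i j, 0 < Pstar i j → δ' ≤ P' t i j)
    (hnδ : (n : ℝ) * δ' ^ N ≤ 1)
    (e : ℕ → Fin n → ℝ)
    (hdyn : ∀ t, e (t + 1) = γ • (P' t).mulVec (e t)) :
    spanv (e N) ≤ γ ^ N * (1 - (n : ℝ) * δ' ^ N) * spanv (e 0) :=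
  value_iteration_span_contraction_general n N γ hγ0 P' Pstar hPnonneg hProw hSnonneg hpos δ' hδ
    hdom e hdyn
end
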